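/- arXiv:1605.03896 — 5 statements merged into one kernel-verified Lean document; each statement's English description precedes it below -/
import Mathlib

section
/- If μ is a finite-Laplace-transform measure on E not concentrated on any affine hyperplane, then the cumulant function k_μ is strictly convex on the interior of {θ : L_μ(θ) < ∞}; conversely, if μ is concentrated on an affine hyperplane, k_μ fails to be strictly convex. -/
/-!
Write `L` for the Laplace transform and `k = log L` for the cumulant, and put
`uᵢ x = ⟪θᵢ, x⟫ - k θᵢ`, so that `exp uᵢ` has `μ`-integral `1`. For `θ = s • θ₁ + t • θ₂`,
strict convexity of `exp` gives `exp (s u₁ + t u₂) ≤ s exp u₁ + t exp u₂`, strictly wherever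
`u₁ x ≠ u₂ x`, i.e. off the hyperplane `⟪θ₁ - θ₂, x⟫ = k θ₁ - k θ₂`. Integrating yields
`exp (k θ - s k θ₁ - t k θ₂) ≤ 1`, strictly unless `μ` is concentrated on that hyperplane.
Conversely, if `⟪a, x⟫ = c` almost everywhere then `L (θ + t • a) = exp (t c) L θ`, so the domain
of `L` is invariant under translation by multiples of `a` and `k` is affine along these lines.
-/

open MeasureTheory RealInnerProductSpace Real Set
open scoped ENNReal

theorem integral_exp_convexComb_lt {α : Type*} [MeasurableSpace α] {μ : Measure α} {u v : α → ℝ}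
    (hu : Integrable (fun x => exp (u x)) μ) (hv : Integrable (fun x => exp (v x)) μ)
    (huv : μ {x | u x ≠ v x} ≠ 0) {a b : ℝ} (ha : 0 < a) (hb : 0 < b) (hab : a + b = 1) :
    ∫ x, exp (a * u x + b * v x) ∂μ < a * ∫ x, exp (u x) ∂μ + b * ∫ x, exp (v x) ∂μ := by
  have hle : ∀ x, exp (a * u x + b * v x) ≤ a * exp (u x) + b * exp (v x) := fun x => by
    simpa only [smul_eq_mul] using
      convexOn_exp.2 (mem_univ (u x)) (mem_univ (v x)) ha.le hb.le hab
  have hlt : ∀ x, u x ≠ v x → exp (a * u x + b * v x) < a * exp (u x) + b * exp (v x) :=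
    fun x hx => by
      simpa only [smul_eq_mul] using
        strictConvexOn_exp.2 (mem_univ (u x)) (mem_univ (v x)) hx ha hb hab
  have hsum : Integrable (fun x => a * exp (u x) + b * exp (v x)) μ :=
    (hu.const_mul a).add (hv.const_mul b)
  have hmeas : AEStronglyMeasurable (fun x => exp (a * u x + b * v x)) μ := by
    have hu' : AEMeasurable u μ := by simpa using hu.1.aemeasurable.log
    have hv' : AEMeasurable v μ := by simpa using hv.1.aemeasurable.log
    exact ((hu'.const_mul a).add (hv'.const_mul b)).exp.aestronglyMeasurable
  have hint : Integrable (fun x => exp (a * u x + b * v x)) μ :=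
    hsum.mono' hmeas (ae_of_all _ fun x => by
      rw [norm_of_nonneg (exp_pos _).le]; exact hle x)
  have hgap : 0 < ∫ x, (a * exp (u x) + b * exp (v x)) - exp (a * u x + b * v x) ∂μ := by
    rw [integral_pos_iff_support_of_nonneg (fun x => sub_nonneg.2 (hle x)) (hsum.sub hint)]
    exact pos_iff_ne_zero.2 fun h0 => huv (measure_mono_null
      (fun x hx => (sub_pos.2 (hlt x hx)).ne') h0)
  rw [integral_sub hsum hint, integral_add (hu.const_mul a) (hv.const_mul b),
    integral_const_mul, integral_const_mul] at hgap
  linarith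

theorem not_strictConvexOn_of_add_add_sub_eq {V : Type*} [AddCommGroup V] [Module ℝ V]
    {s : Set V} {f : V → ℝ} {x v : V} (hv : v ≠ 0) (hadd : x + v ∈ s) (hsub : x - v ∈ s)
    (hf : f (x + v) + f (x - v) = 2 * f x) : ¬ StrictConvexOn ℝ s f := by
  intro hsc
  have hne : x + v ≠ x - v := fun h => by
    have h2v : (2 : ℝ) • v = 0 := by
      rw [two_smul]
      exact eq_neg_iff_add_eq_zero.1 (add_left_cancel (h.trans (sub_eq_add_neg x v)))
    exact hv ((smul_eq_zero.1 h2v).resolve_left two_ne_zero)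
  have hlt := hsc.2 hadd hsub hne (one_half_pos (α := ℝ)) one_half_pos (add_halves 1)
  have hmid : (1 / 2 : ℝ) • (x + v) + (1 / 2 : ℝ) • (x - v) = x := by module
  rw [hmid, smul_eq_mul, smul_eq_mul] at hlt
  linarith

section Cumulant

variable {E : Type*} [NormedAddCommGroup E] [InnerProductSpace ℝ E] [MeasurableSpace E]

noncomputable def laplaceTransform (μ : Measure E) (θ : E) : ℝ≥0∞ :=
  ∫⁻ x, ENNReal.ofReal (exp ⟪θ, x⟫) ∂μ

def laplaceDomain (μ : Measure E) : Set E := {θ | laplaceTransform μ θ < ∞}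

/-- Outside `laplaceDomain μ` this is the junk value `log 0 = 0`. -/
noncomputable def cumulant (μ : Measure E) (θ : E) : ℝ := log (laplaceTransform μ θ).toReal

def IsConcentratedOnHyperplane (μ : Measure E) : Prop :=
  ∃ (a : E) (c : ℝ), a ≠ 0 ∧ μ {x | ⟪a, x⟫ ≠ c} = 0

variable {μ : Measure E}

section Measurable

variable [OpensMeasurableSpace E]

theorem aestronglyMeasurable_exp_inner (θ : E) :
    AEStronglyMeasurable (fun x => exp ⟪θ, x⟫) μ :=
  (continuous_exp.comp (continuous_const.inner continuous_id)).aestronglyMeasurable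

theorem integrable_exp_inner_iff {θ : E} :
    Integrable (fun x => exp ⟪θ, x⟫) μ ↔ θ ∈ laplaceDomain μ := by
  rw [Integrable, and_iff_right (aestronglyMeasurable_exp_inner θ),
    hasFiniteIntegral_iff_ofReal (ae_of_all _ fun _ => (exp_pos _).le)]
  rfl

theorem integral_exp_inner (θ : E) :
    ∫ x, exp ⟪θ, x⟫ ∂μ = (laplaceTransform μ θ).toReal :=
  integral_eq_lintegral_of_nonneg_ae (ae_of_all _ fun _ => (exp_pos _).le)
    (aestronglyMeasurable_exp_inner θ)

theorem convex_laplaceDomain : Convex ℝ (laplaceDomain μ) := by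
  intro θ₁ h₁ θ₂ h₂ a b ha hb hab
  rw [← integrable_exp_inner_iff] at h₁ h₂ ⊢
  refine ((h₁.const_mul a).add (h₂.const_mul b)).mono' (aestronglyMeasurable_exp_inner _)
    (ae_of_all _ fun x => ?_)
  rw [Pi.add_apply, norm_of_nonneg (exp_pos _).le, inner_add_left, real_inner_smul_left,
    real_inner_smul_left]
  simpa only [smul_eq_mul] using convexOn_exp.2 (mem_univ _) (mem_univ _) ha hb hab

theorem exp_cumulant [NeZero μ] {θ : E} (hθ : θ ∈ laplaceDomain μ) :
    exp (cumulant μ θ) = ∫ x, exp ⟪θ, x⟫ ∂μ := by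
  rw [cumulant, ← integral_exp_inner, exp_log (integral_exp_pos (integrable_exp_inner_iff.2 hθ))]

theorem integrable_exp_inner_sub {θ : E} (hθ : θ ∈ laplaceDomain μ) (m : ℝ) :
    Integrable (fun x => exp (⟪θ, x⟫ - m)) μ := by
  simpa only [exp_sub] using (integrable_exp_inner_iff.2 hθ).div_const (exp m)

theorem integral_exp_inner_sub [NeZero μ] {θ : E} (hθ : θ ∈ laplaceDomain μ) (m : ℝ) :
    ∫ x, exp (⟪θ, x⟫ - m) ∂μ = exp (cumulant μ θ - m) := by
  simp only [exp_sub, integral_div, exp_cumulant hθ]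

theorem strictConvexOn_cumulant (hμ : ¬ IsConcentratedOnHyperplane μ) :
    StrictConvexOn ℝ (laplaceDomain μ) (cumulant μ) := by
  refine ⟨convex_laplaceDomain, fun θ₁ h₁ θ₂ h₂ hne a b ha hb hab => ?_⟩
  have : NeZero μ := ⟨fun h0 => hμ ⟨θ₁ - θ₂, 0, sub_ne_zero.2 hne, by simp [h0]⟩⟩
  have hoff : μ {x | ⟪θ₁, x⟫ - cumulant μ θ₁ ≠ ⟪θ₂, x⟫ - cumulant μ θ₂} ≠ 0 := fun h =>
    hμ ⟨θ₁ - θ₂, cumulant μ θ₁ - cumulant μ θ₂, sub_ne_zero.2 hne, by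
      simpa only [inner_sub_left, ne_eq, sub_eq_sub_iff_sub_eq_sub] using h⟩
  have key := integral_exp_convexComb_lt (integrable_exp_inner_sub h₁ _)
    (integrable_exp_inner_sub h₂ _) hoff ha hb hab
  have hcomb : ∀ x, a * (⟪θ₁, x⟫ - cumulant μ θ₁) + b * (⟪θ₂, x⟫ - cumulant μ θ₂) =
      ⟪a • θ₁ + b • θ₂, x⟫ - (a * cumulant μ θ₁ + b * cumulant μ θ₂) := fun x => by
    rw [inner_add_left, real_inner_smul_left, real_inner_smul_left]; ring
  simp only [hcomb, integral_exp_inner_sub (convex_laplaceDomain h₁ h₂ ha.le hb.le hab),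
    integral_exp_inner_sub h₁, integral_exp_inner_sub h₂, sub_self, exp_zero, mul_one, hab,
    exp_lt_one_iff, sub_neg] at key
  simpa only [smul_eq_mul] using key

end Measurable

section Hyperplane

variable {a : E} {c : ℝ}

theorem laplaceTransform_add_smul (h : ∀ᵐ x ∂μ, ⟪a, x⟫ = c) (θ : E) (t : ℝ) :
    laplaceTransform μ (θ + t • a) = ENNReal.ofReal (exp (t * c)) * laplaceTransform μ θ := by
  rw [laplaceTransform, laplaceTransform, ← lintegral_const_mul' _ _ ENNReal.ofReal_ne_top]
  refine lintegral_congr_ae (h.mono fun x hx => ?_)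
  dsimp only
  rw [inner_add_left, real_inner_smul_left, hx, ← ENNReal.ofReal_mul (exp_pos _).le, ← exp_add,
    add_comm]

theorem add_smul_mem_laplaceDomain_iff (h : ∀ᵐ x ∂μ, ⟪a, x⟫ = c) (θ : E) (t : ℝ) :
    θ + t • a ∈ laplaceDomain μ ↔ θ ∈ laplaceDomain μ := by
  simp only [laplaceDomain, mem_ofPred_eq, laplaceTransform_add_smul h,
    ENNReal.mul_lt_top_iff, ENNReal.ofReal_lt_top, true_and, ENNReal.ofReal_eq_zero,
    not_le.2 (exp_pos _), false_or, or_iff_left_iff_imp]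
  intro h0; rw [h0]; exact ENNReal.zero_lt_top

theorem add_smul_mem_interior_laplaceDomain (h : ∀ᵐ x ∂μ, ⟪a, x⟫ = c) {θ : E}
    (hθ : θ ∈ interior (laplaceDomain μ)) (t : ℝ) :
    θ + t • a ∈ interior (laplaceDomain μ) := by
  have hpre : (fun η => η + (-t) • a) ⁻¹' laplaceDomain μ = laplaceDomain μ :=
    ext fun η => add_smul_mem_laplaceDomain_iff h η (-t)
  rw [← hpre]
  exact preimage_interior_subset_interior_preimage (continuous_add_const _)
    (by simpa only [mem_preimage, neg_smul, add_neg_cancel_right] using hθ)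

theorem cumulant_add_add_cumulant_sub (h : ∀ᵐ x ∂μ, ⟪a, x⟫ = c) (θ : E) :
    cumulant μ (θ + a) + cumulant μ (θ - a) = 2 * cumulant μ θ := by
  have hadd := laplaceTransform_add_smul h θ 1
  have hsub := laplaceTransform_add_smul h θ (-1)
  rw [one_smul] at hadd
  rw [neg_one_smul, ← sub_eq_add_neg] at hsub
  simp only [cumulant, hadd, hsub, ENNReal.toReal_mul, ENNReal.toReal_ofReal (exp_pos _).le]
  rcases eq_or_ne (laplaceTransform μ θ).toReal 0 with h0 | h0
  · simp [h0]
  · rw [log_mul (exp_pos _).ne' h0, log_mul (exp_pos _).ne' h0, log_exp, log_exp]; ring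

theorem not_strictConvexOn_cumulant (hμ : IsConcentratedOnHyperplane μ)
    (hint : (interior (laplaceDomain μ)).Nonempty) :
    ¬ StrictConvexOn ℝ (interior (laplaceDomain μ)) (cumulant μ) := by
  obtain ⟨θ, hθ⟩ := hint
  obtain ⟨a, c, ha, hac⟩ := hμ
  have h : ∀ᵐ x ∂μ, ⟪a, x⟫ = c := ae_iff.2 (by simpa only [ne_eq] using hac)
  refine not_strictConvexOn_of_add_add_sub_eq ha ?_ ?_ (cumulant_add_add_cumulant_sub h θ)
  · simpa only [one_smul] using add_smul_mem_interior_laplaceDomain h hθ 1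
  · simpa only [neg_one_smul, ← sub_eq_add_neg] using
      add_smul_mem_interior_laplaceDomain h hθ (-1)

end Hyperplane

end Cumulant

theorem cumulant_strictConvexOn_iff_not_hyperplane_general {E : Type*} [NormedAddCommGroup E]
    [InnerProductSpace ℝ E] [MeasurableSpace E] [BorelSpace E]
    (μ : Measure E) :
    ((¬ ∃ (a : E) (c : ℝ), a ≠ 0 ∧ μ {x : E | ⟪a, x⟫ ≠ c} = 0) →
      StrictConvexOn ℝ (interior {θ : E | ∫⁻ x, ENNReal.ofReal (Real.exp ⟪θ, x⟫) ∂μ < ⊤})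
        (fun θ : E => Real.log (∫⁻ x, ENNReal.ofReal (Real.exp ⟪θ, x⟫) ∂μ).toReal)) ∧
    (((interior {θ : E | ∫⁻ x, ENNReal.ofReal (Real.exp ⟪θ, x⟫) ∂μ < ⊤}).Nonempty ∧
        ∃ (a : E) (c : ℝ), a ≠ 0 ∧ μ {x : E | ⟪a, x⟫ ≠ c} = 0) →
      ¬ StrictConvexOn ℝ (interior {θ : E | ∫⁻ x, ENNReal.ofReal (Real.exp ⟪θ, x⟫) ∂μ < ⊤})
        (fun θ : E => Real.log (∫⁻ x, ENNReal.ofReal (Real.exp ⟪θ, x⟫) ∂μ).toReal)) :=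
  ⟨fun hμ => (strictConvexOn_cumulant hμ).subset interior_subset convex_laplaceDomain.interior,
    fun ⟨hint, hμ⟩ => not_strictConvexOn_cumulant hμ hint⟩

/-- If `μ` is not concentrated on any affine hyperplane, then the cumulant function
`k_μ = log L_μ` is strictly convex on the interior of `{θ : L_μ(θ) < ∞}`; conversely,
if `μ` is concentrated on an affine hyperplane (and the interior is nonempty),
strict convexity fails. -/
theorem cumulant_strictConvexOn_iff_not_hyperplane {E : Type*} [NormedAddCommGroup E]
    [InnerProductSpace ℝ E] [FiniteDimensional ℝ E] [MeasurableSpace E] [BorelSpace E]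
    (μ : Measure E) :
    ((¬ ∃ (a : E) (c : ℝ), a ≠ 0 ∧ μ {x : E | ⟪a, x⟫ ≠ c} = 0) →
      StrictConvexOn ℝ (interior {θ : E | ∫⁻ x, ENNReal.ofReal (Real.exp ⟪θ, x⟫) ∂μ < ⊤})
        (fun θ : E => Real.log (∫⁻ x, ENNReal.ofReal (Real.exp ⟪θ, x⟫) ∂μ).toReal)) ∧
    (((interior {θ : E | ∫⁻ x, ENNReal.ofReal (Real.exp ⟪θ, x⟫) ∂μ < ⊤}).Nonempty ∧
        ∃ (a : E) (c : ℝ), a ≠ 0 ∧ μ {x : E | ⟪a, x⟫ ≠ c} = 0) →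
      ¬ StrictConvexOn ℝ (interior {θ : E | ∫⁻ x, ENNReal.ofReal (Real.exp ⟪θ, x⟫) ∂μ < ⊤})
        (fun θ : E => Real.log (∫⁻ x, ENNReal.ofReal (Real.exp ⟪θ, x⟫) ∂μ).toReal)) :=
  cumulant_strictConvexOn_iff_not_hyperplane_general μ
end

section
/- Let G be a subgroup of GL(E) containing c·Id for some c ≠ 1, and let μ be a measure (not concentrated on a hyperplane, with nonempty Laplace domain) such that the natural exponential family F(μ) is G-invariant, i.e., for each g ∈ G, g_*μ(dx) = e^{⟨a(g),x⟩+b(g)}μ(dx) for some a(g) ∈ E, b(g) ∈ ℝ. Then there exist θ₀ ∈ E and a G-invariant measure μ₀ (i.e., g_*μ₀ is a positive multiple of μ₀ for each g ∈ G) such that μ(dx) = e^{−⟨θ₀,x⟩} μ₀(dx). -/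
open MeasureTheory RealInnerProductSpace
open scoped ENNReal

section AuxNEF

variable {E : Type*} [NormedAddCommGroup E] [InnerProductSpace ℝ E]
  [FiniteDimensional ℝ E] [MeasurableSpace E] [BorelSpace E]

private lemma measExpAux {φ : E → ℝ} (hφ : Continuous φ) :
    Measurable fun x => ENNReal.ofReal (Real.exp (φ x)) :=
  (Real.continuous_exp.comp hφ).measurable.ennreal_ofReal

private lemma measDAux (a : E) (b : ℝ) :
    Measurable fun x : E => ENNReal.ofReal (Real.exp (⟪a, x⟫ + b)) :=
  measExpAux ((Continuous.inner continuous_const continuous_id).add continuous_const)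

private lemma linEquivMeasAux (g : E ≃ₗ[ℝ] E) : Measurable ⇑g := by
  have h := LinearMap.continuous_of_finiteDimensional (g : E →ₗ[ℝ] E)
  exact h.measurable

private lemma mapWithDensityAux (g : E ≃ₗ[ℝ] E) (μ : Measure E)
    {f : E → ℝ≥0∞} (hf : Measurable f) :
    Measure.map (⇑g) (μ.withDensity f)
      = (Measure.map (⇑g) μ).withDensity (fun x => f (g.symm x)) := by
  have hg := linEquivMeasAux g
  have hgs := linEquivMeasAux g.symm
  ext s hs
  have hc : Measurable fun x => f (g.symm x) := hf.comp hgs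
  rw [Measure.map_apply hg hs, withDensity_apply _ (hg hs), withDensity_apply _ hs,
    setLIntegral_map hs hc hg]
  simp only [LinearEquiv.symm_apply_apply]

private lemma aUniqueAux (μ : Measure E) [SigmaFinite μ]
    (hnohyp : ¬ ∃ (a : E) (cc : ℝ), a ≠ 0 ∧ μ {x : E | ⟪a, x⟫ ≠ cc} = 0)
    {a a' : E} {b b' : ℝ}
    (h : μ.withDensity (fun x => ENNReal.ofReal (Real.exp (⟪a, x⟫ + b)))
       = μ.withDensity (fun x => ENNReal.ofReal (Real.exp (⟪a', x⟫ + b')))) :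
    a = a' := by
  have hae := (withDensity_eq_iff_of_sigmaFinite (measDAux a b).aemeasurable
    (measDAux a' b').aemeasurable).1 h
  have h0 : μ {x : E | ¬ (ENNReal.ofReal (Real.exp (⟪a, x⟫ + b))
      = ENNReal.ofReal (Real.exp (⟪a', x⟫ + b')))} = 0 := ae_iff.1 hae
  by_contra hne
  refine hnohyp ⟨a - a', b' - b, sub_ne_zero.2 hne, measure_mono_null ?_ h0⟩
  intro x hx hx'
  apply hx
  have h1 : Real.exp (⟪a, x⟫ + b) = Real.exp (⟪a', x⟫ + b') :=
    (ENNReal.ofReal_eq_ofReal_iff (Real.exp_nonneg _) (Real.exp_nonneg _)).1 hx'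
  have h2 : ⟪a, x⟫ + b = ⟪a', x⟫ + b' := Real.exp_injective h1
  rw [inner_sub_left]
  linarith

private lemma sigmaFiniteAux (μ : Measure E) {θ : E}
    (hθ : ∫⁻ x, ENNReal.ofReal (Real.exp ⟪θ, x⟫) ∂μ < ⊤) : SigmaFinite μ := by
  refine Measure.sigmaFinite_of_countable (S := Set.range fun n : ℕ =>
    {x : E | ENNReal.ofReal (1 / (n + 1) : ℝ) ≤ ENNReal.ofReal (Real.exp ⟪θ, x⟫)})
    (Set.countable_range _) ?_ ?_
  · rintro s ⟨n, rfl⟩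
    have hε : (0 : ℝ≥0∞) < ENNReal.ofReal (1 / (n + 1) : ℝ) := by
      rw [ENNReal.ofReal_pos]; positivity
    have hmark := mul_meas_ge_le_lintegral
      (measExpAux (Continuous.inner continuous_const continuous_id) (φ := fun x : E => ⟪θ, x⟫))
      (μ := μ) (ENNReal.ofReal (1 / (n + 1) : ℝ))
    rcases lt_or_ge (μ {x : E | ENNReal.ofReal (1 / (n + 1) : ℝ)
        ≤ ENNReal.ofReal (Real.exp ⟪θ, x⟫)}) ⊤ with h | h
    · exact h
    · exfalso
      have htop : μ {x : E | ENNReal.ofReal (1 / (n + 1) : ℝ)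
          ≤ ENNReal.ofReal (Real.exp ⟪θ, x⟫)} = ⊤ := top_le_iff.1 h
      rw [htop, ENNReal.mul_top hε.ne'] at hmark
      exact hθ.not_ge hmark
  · rw [Set.eq_univ_iff_forall]
    intro x
    obtain ⟨n, hn⟩ := exists_nat_one_div_lt (Real.exp_pos ⟪θ, x⟫)
    exact ⟨_, ⟨n, rfl⟩, ENNReal.ofReal_le_ofReal hn.le⟩

end AuxNEF

/-- Theorem 2 of the paper: if `G ≤ GL(E)` contains `c·Id` for some `c ∉ {0,1}` and the
natural exponential family `F(μ)` is `G`-invariant (each `g_*μ` has density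
`e^{⟪a(g),x⟫+b(g)}` with respect to `μ`), where `μ` has nonempty open Laplace domain and is
not concentrated on any affine hyperplane, then `μ(dx) = e^{−⟪θ₀,x⟫} μ₀(dx)` for some
`θ₀ ∈ E` and some `G`-invariant measure `μ₀`. -/
theorem invariant_NEF_generating_measure {E : Type*} [NormedAddCommGroup E]
    [InnerProductSpace ℝ E] [FiniteDimensional ℝ E] [MeasurableSpace E] [BorelSpace E]
    (G : Subgroup (E ≃ₗ[ℝ] E))
    (c : ℝ) (hc0 : c ≠ 0) (hc1 : c ≠ 1)
    (σ : E ≃ₗ[ℝ] E) (hσ : ∀ x : E, σ x = c • x) (hσG : σ ∈ G)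
    (μ : Measure E)
    (hdom : (interior {θ : E | ∫⁻ x, ENNReal.ofReal (Real.exp ⟪θ, x⟫) ∂μ < ⊤}).Nonempty)
    (hnohyp : ¬ ∃ (a : E) (cc : ℝ), a ≠ 0 ∧ μ {x : E | ⟪a, x⟫ ≠ cc} = 0)
    (hinv : ∀ g ∈ G, ∃ (ag : E) (bg : ℝ), Measure.map (⇑g) μ =
      μ.withDensity fun x => ENNReal.ofReal (Real.exp (⟪ag, x⟫ + bg))) :
    ∃ (θ₀ : E) (μ₀ : Measure E),
      (∀ g ∈ G, ∃ k : ℝ, 0 < k ∧ Measure.map (⇑g) μ₀ = ENNReal.ofReal k • μ₀) ∧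
      μ = μ₀.withDensity fun x => ENNReal.ofReal (Real.exp (-⟪θ₀, x⟫)) := by
  classical
  obtain ⟨θd, hθd⟩ := hdom
  have hθmem : θd ∈ {θ : E | ∫⁻ x, ENNReal.ofReal (Real.exp ⟪θ, x⟫) ∂μ < ⊤} :=
    interior_subset hθd
  have hθint : ∫⁻ x, ENNReal.ofReal (Real.exp ⟪θd, x⟫) ∂μ < ⊤ := hθmem
  haveI : SigmaFinite μ := sigmaFiniteAux μ hθint
  obtain ⟨aσ, bσ, hσeq⟩ := hinv σ hσG
  have hσsymm : ∀ x : E, σ.symm x = c⁻¹ • x := by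
    intro x
    rw [LinearEquiv.symm_apply_eq, hσ, smul_smul, mul_inv_cancel₀ hc0, one_smul]
  have hcinv : (1 : ℝ) - c⁻¹ ≠ 0 := by
    intro h
    apply hc1
    have : c⁻¹ = 1 := by linarith
    have := congrArg (c * ·) this
    simpa [mul_inv_cancel₀ hc0] using this.symm
  set θ₀ : E := ((1 : ℝ) - c⁻¹)⁻¹ • aσ with hθ₀def
  set f₀ : E → ℝ≥0∞ := fun x => ENNReal.ofReal (Real.exp ⟪θ₀, x⟫) with hf₀def
  have hf₀meas : Measurable f₀ :=
    measExpAux (Continuous.inner continuous_const continuous_id)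
  refine ⟨θ₀, μ.withDensity f₀, ?_, ?_⟩
  · -- invariance of μ₀
    intro g hg
    obtain ⟨ag, bg, hgeq⟩ := hinv g hg
    set φ : E →ₗ[ℝ] E := LinearMap.adjoint (g.symm : E →ₗ[ℝ] E) with hφdef
    have hφ_inner : ∀ (a x : E), ⟪a, g.symm x⟫ = ⟪φ a, x⟫ := by
      intro a x
      rw [hφdef, LinearMap.adjoint_inner_left]
      simp
    -- pushforward of μ by σ ∘ g
    obtain ⟨a1, b1, h1⟩ := hinv (σ * g) (mul_mem hσG hg)
    have hcoe1 : ⇑(σ * g) = ⇑σ ∘ ⇑g := rfl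
    have hcoe2 : ⇑(g * σ) = ⇑g ∘ ⇑σ := rfl
    have w1 : Measure.map (⇑(σ * g)) μ = μ.withDensity
        (fun x => ENNReal.ofReal (Real.exp (⟪aσ + c⁻¹ • ag, x⟫ + (bσ + bg)))) := by
      have hm1 : Measurable fun x : E => ENNReal.ofReal (Real.exp (⟪ag, σ.symm x⟫ + bg)) :=
        (measDAux ag bg).comp (linEquivMeasAux σ.symm)
      rw [hcoe1, ← Measure.map_map (linEquivMeasAux σ) (linEquivMeasAux g), hgeq,
        mapWithDensityAux σ μ (measDAux ag bg), hσeq,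
        ← withDensity_mul μ (measDAux aσ bσ) hm1]
      congr 1
      funext x
      simp only [Pi.mul_apply]
      rw [hσsymm x, ← ENNReal.ofReal_mul (Real.exp_nonneg _), ← Real.exp_add]
      congr 1
      rw [real_inner_smul_right, inner_add_left, real_inner_smul_left]
      ring
    have w2 : Measure.map (⇑(g * σ)) μ = μ.withDensity
        (fun x => ENNReal.ofReal (Real.exp (⟪ag + φ aσ, x⟫ + (bg + bσ)))) := by
      have hm2 : Measurable fun x : E => ENNReal.ofReal (Real.exp (⟪aσ, g.symm x⟫ + bσ)) :=
        (measDAux aσ bσ).comp (linEquivMeasAux g.symm)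
      rw [hcoe2, ← Measure.map_map (linEquivMeasAux g) (linEquivMeasAux σ), hσeq,
        mapWithDensityAux g μ (measDAux aσ bσ), hgeq,
        ← withDensity_mul μ (measDAux ag bg) hm2]
      congr 1
      funext x
      simp only [Pi.mul_apply]
      rw [hφ_inner aσ x, ← ENNReal.ofReal_mul (Real.exp_nonneg _), ← Real.exp_add]
      congr 1
      rw [inner_add_left]
      ring
    have hcomm : σ * g = g * σ := by
      ext x
      show σ (g x) = g (σ x)
      rw [hσ, hσ]
      exact (_root_.map_smul g c x).symm
    have e1 : a1 = aσ + c⁻¹ • ag := aUniqueAux μ hnohyp (h1.symm.trans w1)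
    have h1' : Measure.map (⇑(g * σ)) μ
        = μ.withDensity fun x => ENNReal.ofReal (Real.exp (⟪a1, x⟫ + b1)) := by
      rw [← hcomm]; exact h1
    have e2 : a1 = ag + φ aσ := aUniqueAux μ hnohyp (h1'.symm.trans w2)
    have hrel : aσ + c⁻¹ • ag = ag + φ aσ := e1.symm.trans e2
    have hφaσ : φ aσ = aσ - ((1 : ℝ) - c⁻¹) • ag := by
      have : φ aσ = aσ + c⁻¹ • ag - ag := by
        rw [hrel]; abel
      rw [this, sub_smul, one_smul]; abel
    have hkey : ag + φ θ₀ = θ₀ := by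
      rw [hθ₀def, LinearMap.map_smul, hφaσ, smul_sub, smul_smul, inv_mul_cancel₀ hcinv, one_smul]
      abel
    have hmap : Measure.map (⇑g) (μ.withDensity f₀)
        = ENNReal.ofReal (Real.exp bg) • μ.withDensity f₀ := by
      have hm3 : Measurable fun x : E => f₀ (g.symm x) :=
        hf₀meas.comp (linEquivMeasAux g.symm)
      rw [mapWithDensityAux g μ hf₀meas, hgeq,
        ← withDensity_mul μ (measDAux ag bg) hm3]
      have hfn : (fun x => ENNReal.ofReal (Real.exp (⟪ag, x⟫ + bg)))
          * (fun x => f₀ (g.symm x))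
          = ENNReal.ofReal (Real.exp bg) • f₀ := by
        funext x
        simp only [Pi.mul_apply, Pi.smul_apply, hf₀def, smul_eq_mul]
        rw [hφ_inner θ₀ x, ← ENNReal.ofReal_mul (Real.exp_nonneg _),
          ← ENNReal.ofReal_mul (Real.exp_nonneg _), ← Real.exp_add, ← Real.exp_add]
        have hx : ⟪ag, x⟫ + ⟪φ θ₀, x⟫ = ⟪θ₀, x⟫ := by
          rw [← inner_add_left, hkey]
        have harg : ⟪ag, x⟫ + bg + ⟪φ θ₀, x⟫ = bg + ⟪θ₀, x⟫ := by linarith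
        rw [harg]
      rw [hfn, withDensity_smul _ hf₀meas]
    exact ⟨Real.exp bg, Real.exp_pos _, hmap⟩
  · -- μ = μ₀ e^{-⟪θ₀,x⟫}
    have hneg : Measurable fun x : E => ENNReal.ofReal (Real.exp (-⟪θ₀, x⟫)) :=
      measExpAux (Continuous.inner continuous_const continuous_id).neg
    rw [← withDensity_mul μ hf₀meas hneg]
    have hone : (f₀ * fun x => ENNReal.ofReal (Real.exp (-⟪θ₀, x⟫))) = 1 := by
      funext x
      simp only [Pi.mul_apply, Pi.one_apply, hf₀def]
      rw [← ENNReal.ofReal_mul (Real.exp_nonneg _), ← Real.exp_add, add_neg_cancel,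
        Real.exp_zero, ENNReal.ofReal_one]
    rw [hone, withDensity_one]
end

section
/- In the setting of the third step of the characterization theorem: let E_ε be the block diagonal matrix with blocks ε_i I_{n_i}, ε ∈ {−1,1}^r, with ε_k = 1 and ε_l = −1 for some k < l, and let v ∈ V_{lk} with v vᵀ = 2 I_{n_l}. Let T(v) ∈ H be the matrix with identity diagonal blocks, block (l,k) equal to v, and all other off-diagonal blocks zero. Then for every x in the block-decomposed space Z_V, the matrix ½(T(v) x T(v)ᵀ + T(−v) x T(−v)ᵀ) agrees with x in all blocks except the (l,l) diagonal block, which equals (2x_{kk} + x_{ll}) I_{n_l}. -/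
open Matrix

/-- Block index set for the partition `N = n 0 + … + n (r-1)`. -/
abbrev BlockIdx {r : ℕ} (n : Fin r → ℕ) := (k : Fin r) × Fin (n k)

/-- The matrix `T(v) ∈ H` with identity diagonal blocks, block `(l,k)` equal to `v`,
and all other off-diagonal blocks zero. -/
noncomputable def Tmat {r : ℕ} {n : Fin r → ℕ} (l k : Fin r)
    (v : Matrix (Fin (n l)) (Fin (n k)) ℝ) : Matrix (BlockIdx n) (BlockIdx n) ℝ :=
  1 + Matrix.of fun p q : BlockIdx n =>
    if h : p.1 = l ∧ q.1 = k then
      v (Fin.cast (congrArg n h.1) p.2) (Fin.cast (congrArg n h.2) q.2)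
    else 0

/-- Third step of the characterization theorem: for `x ∈ Z_V` (symmetric, with scalar
diagonal blocks `x_{mm} = d m · I` and off-diagonal blocks in `V`), where the `V_{lk}`
satisfy (V1)-(V3), `v ∈ V_{lk}` with `v vᵀ = 2 I`, and `k < l`, the matrix
`½(T(v) x T(v)ᵀ + T(−v) x T(−v)ᵀ)` agrees with `x` in all blocks except the `(l,l)`
diagonal block, which equals `(2 x_{kk} + x_{ll}) I`. -/
theorem averaged_conjugation {r : ℕ} {n : Fin r → ℕ}
    (V : ∀ l k : Fin r, Submodule ℝ (Matrix (Fin (n l)) (Fin (n k)) ℝ))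
    (hV1 : ∀ (i k l : Fin r), i < k → k < l →
      ∀ A ∈ V l k, ∀ B ∈ V k i, A * B ∈ V l i)
    (hV2 : ∀ (i k l : Fin r), i < k → k < l →
      ∀ A ∈ V l i, ∀ B ∈ V k i, A * Bᵀ ∈ V l k)
    (hV3 : ∀ (k l : Fin r), k < l → ∀ A ∈ V l k,
      ∃ c : ℝ, A * Aᵀ = c • (1 : Matrix (Fin (n l)) (Fin (n l)) ℝ))
    (k l : Fin r) (hkl : k < l)
    (v : Matrix (Fin (n l)) (Fin (n k)) ℝ) (hv : v ∈ V l k)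
    (hvv : v * vᵀ = (2 : ℝ) • (1 : Matrix (Fin (n l)) (Fin (n l)) ℝ))
    (x : Matrix (BlockIdx n) (BlockIdx n) ℝ) (hxsym : x.IsSymm) (d : Fin r → ℝ)
    (hxdiag : ∀ (m : Fin r) (i j : Fin (n m)),
      x ⟨m, i⟩ ⟨m, j⟩ = if i = j then d m else 0)
    (hxoff : ∀ l' k' : Fin r, k' < l' →
      (Matrix.of fun i j => x ⟨l', i⟩ ⟨k', j⟩) ∈ V l' k') :
    (∀ p q : BlockIdx n, ¬(p.1 = l ∧ q.1 = l) →
      ((2 : ℝ)⁻¹ • (Tmat l k v * x * (Tmat l k v)ᵀ +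
        Tmat l k (-v) * x * (Tmat l k (-v))ᵀ)) p q = x p q) ∧
    (∀ i j : Fin (n l),
      ((2 : ℝ)⁻¹ • (Tmat l k v * x * (Tmat l k v)ᵀ +
        Tmat l k (-v) * x * (Tmat l k (-v))ᵀ)) ⟨l, i⟩ ⟨l, j⟩ =
        if i = j then 2 * d k + d l else 0) := by
  classical
  set E : Matrix (BlockIdx n) (BlockIdx n) ℝ :=
    Matrix.of (fun p q : BlockIdx n =>
      if h : p.1 = l ∧ q.1 = k then
        v (Fin.cast (congrArg n h.1) p.2) (Fin.cast (congrArg n h.2) q.2)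
      else 0) with hEdef
  have hTpos : Tmat l k v = 1 + E := rfl
  have hTneg : Tmat l k (-v) = 1 - E := by
    unfold Tmat
    rw [sub_eq_add_neg]
    congr 1
    ext p q
    simp only [hEdef, Matrix.of_apply, Matrix.neg_apply]
    split <;> simp
  -- basic entry facts about E
  have hEzl : ∀ (p q : BlockIdx n), p.1 ≠ l → E p q = 0 := by
    intro p q hp
    simp only [hEdef, Matrix.of_apply]
    rw [dif_neg]; tauto
  have hEzk : ∀ (p q : BlockIdx n), q.1 ≠ k → E p q = 0 := by
    intro p q hq
    simp only [hEdef, Matrix.of_apply]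
    rw [dif_neg]; tauto
  have hElk : ∀ (i : Fin (n l)) (i' : Fin (n k)), E ⟨l, i⟩ ⟨k, i'⟩ = v i i' := by
    intro i i'
    simp [hEdef]
  -- multiplication formulas
  have hmulE : ∀ (A : Matrix (BlockIdx n) (BlockIdx n) ℝ) (i : Fin (n l)) (q : BlockIdx n),
      (E * A) ⟨l, i⟩ q = ∑ i' : Fin (n k), v i i' * A ⟨k, i'⟩ q := by
    intro A i q
    rw [Matrix.mul_apply, ← Finset.univ_sigma_univ, Finset.sum_sigma]
    rw [Finset.sum_eq_single k]
    · exact Finset.sum_congr rfl fun i' _ => by rw [hElk]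
    · intro m _ hm
      exact Finset.sum_eq_zero fun i' _ => by rw [hEzk _ _ hm, zero_mul]
    · intro h; exact absurd (Finset.mem_univ k) h
  have hmulET : ∀ (A : Matrix (BlockIdx n) (BlockIdx n) ℝ) (p : BlockIdx n) (j : Fin (n l)),
      (A * Eᵀ) p ⟨l, j⟩ = ∑ j' : Fin (n k), A p ⟨k, j'⟩ * v j j' := by
    intro A p j
    rw [Matrix.mul_apply, ← Finset.univ_sigma_univ, Finset.sum_sigma]
    rw [Finset.sum_eq_single k]
    · exact Finset.sum_congr rfl fun j' _ => by rw [Matrix.transpose_apply, hElk]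
    · intro m _ hm
      exact Finset.sum_eq_zero fun j' _ => by
        rw [Matrix.transpose_apply, hEzk _ _ hm, mul_zero]
    · intro h; exact absurd (Finset.mem_univ k) h
  have hmulEz : ∀ (A : Matrix (BlockIdx n) (BlockIdx n) ℝ) (p q : BlockIdx n), p.1 ≠ l →
      (E * A) p q = 0 := by
    intro A p q hp
    rw [Matrix.mul_apply]
    exact Finset.sum_eq_zero fun p' _ => by rw [hEzl _ _ hp, zero_mul]
  have hmulETz : ∀ (A : Matrix (BlockIdx n) (BlockIdx n) ℝ) (p q : BlockIdx n), q.1 ≠ l →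
      (A * Eᵀ) p q = 0 := by
    intro A p q hq
    rw [Matrix.mul_apply]
    exact Finset.sum_eq_zero fun q' _ => by
      rw [Matrix.transpose_apply, hEzl _ _ hq, mul_zero]
  -- the averaged matrix is x + E x Eᵀ
  have key : (2 : ℝ)⁻¹ • (Tmat l k v * x * (Tmat l k v)ᵀ +
      Tmat l k (-v) * x * (Tmat l k (-v))ᵀ) = x + E * x * Eᵀ := by
    rw [hTpos, hTneg]
    have hsum : (1 + E) * x * (1 + E)ᵀ + (1 - E) * x * (1 - E)ᵀ =
        (2 : ℝ) • (x + E * x * Eᵀ) := by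
      rw [Matrix.transpose_add, Matrix.transpose_sub, Matrix.transpose_one, two_smul]
      noncomm_ring
    rw [hsum, smul_smul]
    norm_num
  have hvv' : ∀ i j : Fin (n l), ∑ i' : Fin (n k), v i i' * v j i' =
      if i = j then 2 else 0 := by
    intro i j
    have := congrFun (congrFun hvv i) j
    simpa [Matrix.mul_apply, Matrix.transpose_apply, Matrix.smul_apply,
      Matrix.one_apply, mul_comm] using this
  constructor
  · intro p q hpq
    rw [key, Matrix.add_apply]
    have : (E * x * Eᵀ) p q = 0 := by
      rcases not_and_or.mp hpq with hp | hq
      · rw [mul_assoc]; exact hmulEz _ p q hp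
      · exact hmulETz _ p q hq
    rw [this, add_zero]
  · intro i j
    rw [key, Matrix.add_apply, mul_assoc, hmulE]
    have hx : ∀ i' : Fin (n k), (x * Eᵀ) ⟨k, i'⟩ ⟨l, j⟩ = d k * v j i' := by
      intro i'
      rw [hmulET]
      rw [Finset.sum_congr rfl fun j' _ => by rw [hxdiag k i' j']]
      simp [Finset.sum_ite_eq, ite_mul]
    rw [Finset.sum_congr rfl fun i' _ => by rw [hx i']]
    have : ∑ i' : Fin (n k), v i i' * (d k * v j i') =
        d k * ∑ i' : Fin (n k), v i i' * v j i' := by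
      rw [Finset.mul_sum]; exact Finset.sum_congr rfl fun i' _ => by ring
    rw [this, hvv', hxdiag]
    split <;> ring
end

section
/- Consequently (averaging identity for the adjoint action): with T(v) as above and ⟨x,y⟩ = Σ_k x_{kk}y_{kk} + 2Σ_{k<l}(X_{lk}|Y_{lk}) the standard inner product on Z_V, one has ½(ρ*(T(v))E_ε + ρ*(T(−v))E_ε) = E_{ε'}, where ε'_i = ε_i for i ≠ k and ε'_k = −1. Here ρ*(T) is the adjoint of ρ(T)x = TxTᵀ with respect to ⟨·,·⟩. -/
open Matrix

/-- The standard inner product `⟨x,y⟩ = Σ_m x_{mm} y_{mm} + 2 Σ_{m'<m} (X_{mm'}|Y_{mm'})`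
on `Z_V`, written at the level of matrix entries: for blocks `X_{mm'} ∈ V_{mm'}` satisfying
(V3) one has `(X|Y) = tr(X Yᵀ)/n_m`, and `x_{mm} y_{mm} = (Σ_i x_{(m,i),(m,i)} y_{(m,i),(m,i)})/n_m`. -/
noncomputable def stdInner {r : ℕ} {n : Fin r → ℕ}
    (x y : Matrix (BlockIdx n) (BlockIdx n) ℝ) : ℝ :=
  (∑ m : Fin r, ((n m : ℝ)⁻¹ * ∑ i : Fin (n m), x ⟨m, i⟩ ⟨m, i⟩ * y ⟨m, i⟩ ⟨m, i⟩)) +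
  2 * ∑ m : Fin r, ∑ m' : Fin r,
    if m' < m then
      (n m : ℝ)⁻¹ * ∑ i : Fin (n m), ∑ j : Fin (n m'),
        x ⟨m, i⟩ ⟨m', j⟩ * y ⟨m, i⟩ ⟨m', j⟩
    else 0

/-- The block diagonal matrix `E_ε` with blocks `ε_m I_{n_m}`. -/
noncomputable def Emat {r : ℕ} {n : Fin r → ℕ} (ε : Fin r → ℝ) :
    Matrix (BlockIdx n) (BlockIdx n) ℝ :=
  Matrix.of fun p q : BlockIdx n => if p = q then ε p.1 else 0

/-- Averaging identity for the adjoint action: `½(ρ*(T(v))E_ε + ρ*(T(−v))E_ε) = E_{ε'}`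
with `ε'_i = ε_i` for `i ≠ k`, `ε'_k = −1`; expressed through the defining pairing
`⟨ρ(T)x, ξ⟩ = ⟨x, ρ*(T)ξ⟩` of `ρ*(T)`, valid for every `x ∈ Z_V`. -/
theorem averaged_adjoint_action {r : ℕ} {n : Fin r → ℕ} (hn : ∀ m, 0 < n m)
    (V : ∀ l k : Fin r, Submodule ℝ (Matrix (Fin (n l)) (Fin (n k)) ℝ))
    (hV1 : ∀ (i k l : Fin r), i < k → k < l →
      ∀ A ∈ V l k, ∀ B ∈ V k i, A * B ∈ V l i)
    (hV2 : ∀ (i k l : Fin r), i < k → k < l →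
      ∀ A ∈ V l i, ∀ B ∈ V k i, A * Bᵀ ∈ V l k)
    (hV3 : ∀ (k l : Fin r), k < l → ∀ A ∈ V l k,
      ∃ c : ℝ, A * Aᵀ = c • (1 : Matrix (Fin (n l)) (Fin (n l)) ℝ))
    (ε : Fin r → ℝ) (hεpm : ∀ m, ε m = 1 ∨ ε m = -1)
    (k l : Fin r) (hkl : k < l) (hεk : ε k = 1) (hεl : ε l = -1)
    (v : Matrix (Fin (n l)) (Fin (n k)) ℝ) (hv : v ∈ V l k)
    (hvv : v * vᵀ = (2 : ℝ) • (1 : Matrix (Fin (n l)) (Fin (n l)) ℝ)) :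
    ∀ (x : Matrix (BlockIdx n) (BlockIdx n) ℝ) (d : Fin r → ℝ), x.IsSymm →
      (∀ (m : Fin r) (i j : Fin (n m)), x ⟨m, i⟩ ⟨m, j⟩ = if i = j then d m else 0) →
      (∀ l' k' : Fin r, k' < l' →
        (Matrix.of fun i j => x ⟨l', i⟩ ⟨k', j⟩) ∈ V l' k') →
      stdInner (Tmat l k v * x * (Tmat l k v)ᵀ) (Emat ε) +
        stdInner (Tmat l k (-v) * x * (Tmat l k (-v))ᵀ) (Emat ε) =
      2 * stdInner x (Emat (Function.update ε k (-1))) := by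
  intro x d hsymm hdiag hblocks
  classical
  -- the strictly lower-triangular part `N` of `T(v)`
  set N : Matrix (BlockIdx n) (BlockIdx n) ℝ :=
    Matrix.of (fun p q : BlockIdx n =>
      if h : p.1 = l ∧ q.1 = k then
        v (Fin.cast (congrArg n h.1) p.2) (Fin.cast (congrArg n h.2) q.2)
      else 0) with hNdef
  have hT : Tmat l k v = 1 + N := rfl
  have hT' : Tmat l k (-v) = 1 - N := by
    unfold Tmat
    rw [sub_eq_add_neg]
    congr 1
    ext p q
    simp only [hNdef, Matrix.of_apply, Matrix.neg_apply]
    split_ifs with h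
    · simp
    · simp
  -- inner products against `Emat` only see block traces
  have hstd : ∀ (y : Matrix (BlockIdx n) (BlockIdx n) ℝ) (e : Fin r → ℝ),
      stdInner y (Emat e)
        = ∑ m : Fin r, (n m : ℝ)⁻¹ * (e m * ∑ i : Fin (n m), y ⟨m, i⟩ ⟨m, i⟩) := by
    intro y e
    unfold stdInner
    have h0 : ∀ m m' : Fin r,
        (if m' < m then (n m : ℝ)⁻¹ * ∑ i : Fin (n m), ∑ j : Fin (n m'),
          y ⟨m, i⟩ ⟨m', j⟩ * (Emat e) ⟨m, i⟩ ⟨m', j⟩ else 0) = 0 := by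
      intro m m'
      split_ifs with h
      · have hz : ∀ (i : Fin (n m)) (j : Fin (n m')),
            (Emat e) ⟨m, i⟩ ⟨m', j⟩ = (0 : ℝ) := by
          intro i j
          have : (⟨m, i⟩ : BlockIdx n) ≠ ⟨m', j⟩ := by
            intro hcontra
            exact h.ne' (congrArg Sigma.fst hcontra)
          simp [Emat, this]
        simp [hz]
      · rfl
    rw [Finset.sum_congr rfl (fun m _ => Finset.sum_congr rfl fun m' _ => h0 m m')]
    have h1 : ∀ m : Fin r, ∀ i : Fin (n m),
        y ⟨m, i⟩ ⟨m, i⟩ * (Emat e) ⟨m, i⟩ ⟨m, i⟩ = e m * y ⟨m, i⟩ ⟨m, i⟩ := by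
      intro m i
      simp [Emat, mul_comm]
    simp only [h1, Finset.sum_const_zero, mul_zero, add_zero, Finset.mul_sum]
  -- the two conjugations average to `x + N x Nᵀ`
  have key : Tmat l k v * x * (Tmat l k v)ᵀ + Tmat l k (-v) * x * (Tmat l k (-v))ᵀ
      = (x + x) + (N * x * Nᵀ + N * x * Nᵀ) := by
    rw [hT, hT']
    simp only [Matrix.transpose_add, Matrix.transpose_sub, Matrix.transpose_one]
    noncomm_ring
  -- entries of N
  have hNk : ∀ (i : Fin (n l)) (j : Fin (n k)), N ⟨l, i⟩ ⟨k, j⟩ = v i j := by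
    intro i j
    simp [hNdef]
  have hNrow : ∀ (m : Fin r) (i : Fin (n m)) (q : BlockIdx n), m ≠ l → N ⟨m, i⟩ q = 0 := by
    intro m i q hm
    simp [hNdef, hm]
  have hNcol : ∀ (i : Fin (n l)) (c : Fin r) (e : Fin (n c)), c ≠ k → N ⟨l, i⟩ ⟨c, e⟩ = 0 := by
    intro i c e hc
    simp [hNdef, hc]
  -- the row entries of N * x
  have hNxrow : ∀ (i : Fin (n l)) (q : BlockIdx n),
      (N * x) ⟨l, i⟩ q = ∑ b : Fin (n k), v i b * x ⟨k, b⟩ q := by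
    intro i q
    rw [Matrix.mul_apply, ← Finset.univ_sigma_univ, Finset.sum_sigma]
    rw [Fintype.sum_eq_single k (fun c hc => ?_)]
    · exact Finset.sum_congr rfl fun b _ => by rw [hNk]
    · exact Finset.sum_eq_zero fun e _ => by rw [hNcol i c e hc, zero_mul]
  have hvvi : ∀ i : Fin (n l), ∑ e : Fin (n k), v i e * v i e = 2 := by
    intro i
    have h := congrFun (congrFun hvv i) i
    simpa [Matrix.mul_apply, Matrix.transpose_apply, Matrix.smul_apply,
      Matrix.one_apply] using h
  have hNxN : ∀ i : Fin (n l), (N * x * Nᵀ) ⟨l, i⟩ ⟨l, i⟩ = 2 * d k := by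
    intro i
    rw [Matrix.mul_apply, ← Finset.univ_sigma_univ, Finset.sum_sigma]
    rw [Fintype.sum_eq_single k (fun c hc => ?_)]
    · have hrow : ∀ e : Fin (n k), (N * x) ⟨l, i⟩ ⟨k, e⟩ = v i e * d k := by
        intro e
        rw [hNxrow]
        have : ∀ b : Fin (n k), v i b * x ⟨k, b⟩ ⟨k, e⟩
            = if b = e then v i b * d k else 0 := by
          intro b
          rw [hdiag]
          split_ifs <;> simp
        rw [Finset.sum_congr rfl fun b _ => this b, Finset.sum_ite_eq' Finset.univ e]
        simp
      have : ∀ e : Fin (n k), (N * x) ⟨l, i⟩ ⟨k, e⟩ * Nᵀ ⟨k, e⟩ ⟨l, i⟩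
          = d k * (v i e * v i e) := by
        intro e
        rw [Matrix.transpose_apply, hNk, hrow]
        ring
      rw [Finset.sum_congr rfl fun e _ => this e, ← Finset.mul_sum, hvvi]
      ring
    · exact Finset.sum_eq_zero fun e _ => by
        rw [Matrix.transpose_apply, hNcol i c e hc, mul_zero]
  -- block traces of N x Nᵀ
  have hblocktr : ∀ m : Fin r, ∑ i : Fin (n m), (N * x * Nᵀ) ⟨m, i⟩ ⟨m, i⟩
      = if m = l then 2 * (n l : ℝ) * d k else 0 := by
    intro m
    by_cases hm : m = l
    · subst hm
      simp [hNxN, Finset.sum_const, Finset.card_univ, nsmul_eq_mul]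
      ring
    · rw [if_neg hm]
      refine Finset.sum_eq_zero fun i _ => ?_
      rw [Matrix.mul_apply]
      refine Finset.sum_eq_zero fun q _ => ?_
      rw [Matrix.mul_apply]
      rw [Finset.sum_eq_zero fun q' _ => by rw [hNrow m i q' hm, zero_mul], zero_mul]
  -- diagonal block traces of x
  have hxdiag : ∀ m : Fin r, ∑ i : Fin (n m), x ⟨m, i⟩ ⟨m, i⟩ = (n m : ℝ) * d m := by
    intro m
    have : ∀ i : Fin (n m), x ⟨m, i⟩ ⟨m, i⟩ = d m := by
      intro i; rw [hdiag]; simp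
    rw [Finset.sum_congr rfl fun i _ => this i]
    simp [Finset.sum_const, Finset.card_univ, nsmul_eq_mul]
  -- combined block traces
  have hsum : ∀ m : Fin r,
      (∑ i : Fin (n m), (Tmat l k v * x * (Tmat l k v)ᵀ) ⟨m, i⟩ ⟨m, i⟩)
        + ∑ i : Fin (n m), (Tmat l k (-v) * x * (Tmat l k (-v))ᵀ) ⟨m, i⟩ ⟨m, i⟩
      = 2 * ((n m : ℝ) * d m) + (if m = l then 4 * (n l : ℝ) * d k else 0) := by
    intro m
    have hptw : ∀ i : Fin (n m),
        (Tmat l k v * x * (Tmat l k v)ᵀ) ⟨m, i⟩ ⟨m, i⟩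
          + (Tmat l k (-v) * x * (Tmat l k (-v))ᵀ) ⟨m, i⟩ ⟨m, i⟩
        = (x ⟨m, i⟩ ⟨m, i⟩ + x ⟨m, i⟩ ⟨m, i⟩)
          + ((N * x * Nᵀ) ⟨m, i⟩ ⟨m, i⟩ + (N * x * Nᵀ) ⟨m, i⟩ ⟨m, i⟩) := by
      intro i
      have h := congrFun (congrFun key ⟨m, i⟩) ⟨m, i⟩
      simpa [Matrix.add_apply] using h
    rw [← Finset.sum_add_distrib, Finset.sum_congr rfl fun i _ => hptw i,
      Finset.sum_add_distrib, Finset.sum_add_distrib, Finset.sum_add_distrib,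
      hxdiag, hblocktr]
    split_ifs with h
    · ring
    · ring
  -- now assemble everything
  rw [hstd, hstd, hstd]
  have hterm : ∀ m : Fin r,
      (n m : ℝ)⁻¹ * (ε m * ∑ i : Fin (n m),
          (Tmat l k v * x * (Tmat l k v)ᵀ) ⟨m, i⟩ ⟨m, i⟩)
        + (n m : ℝ)⁻¹ * (ε m * ∑ i : Fin (n m),
          (Tmat l k (-v) * x * (Tmat l k (-v))ᵀ) ⟨m, i⟩ ⟨m, i⟩)
      = 2 * (ε m * d m) + (if m = l then -(4 * d k) else 0) := by
    intro m
    have hnm : ((n m : ℝ)) ≠ 0 := Nat.cast_ne_zero.mpr (hn m).ne'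
    rw [← mul_add, ← mul_add, hsum m]
    by_cases hm : m = l
    · subst hm
      rw [if_pos rfl, if_pos rfl, hεl]
      field_simp
      ring
    · rw [if_neg hm, if_neg hm]
      field_simp
      ring
  rw [← Finset.sum_add_distrib, Finset.sum_congr rfl fun m _ => hterm m,
    Finset.sum_add_distrib, Finset.sum_ite_eq' Finset.univ l]
  have hterm2 : ∀ m : Fin r,
      (n m : ℝ)⁻¹ * (Function.update ε k (-1) m * ∑ i : Fin (n m), x ⟨m, i⟩ ⟨m, i⟩)
      = ε m * d m + (if m = k then -d m - ε m * d m else 0) := by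
    intro m
    have hnm : ((n m : ℝ)) ≠ 0 := Nat.cast_ne_zero.mpr (hn m).ne'
    rw [hxdiag, Function.update_apply]
    by_cases hm : m = k
    · rw [if_pos hm, if_pos hm]
      field_simp
      ring
    · rw [if_neg hm, if_neg hm]
      field_simp
      ring
  rw [Finset.sum_congr rfl fun m _ => hterm2 m, Finset.sum_add_distrib,
    Finset.sum_ite_eq' Finset.univ k]
  simp only [Finset.mem_univ, if_true]
  rw [hεk, ← Finset.mul_sum]
  ring
end

section
/- If s ∈ Ξ(ε) with s_k = 0 for some k, then ε_k = 0 and V_{ki} = 0 whenever ε_i = 1 (for i < k); consequently every element x = T E_ε Tᵀ of the orbit O_ε (T block lower triangular with positive diagonal) satisfies x_{kk} = ε_k t_{kk}² + Σ_{i<k} ε_i ‖T_{ki}‖² = 0, so the orbit O_ε is contained in the hyperplane {x ∈ Z_V : x_{kk} = 0}. -/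
open Matrix

/-- If `s ∈ Ξ(ε)` with `s_k = 0` for some `k`, then `ε_k = 0` and `V_{ki} = 0` whenever
`ε_i = 1` (for `i < k`); consequently every element `x = T E_ε Tᵀ` of the orbit `O_ε`
(`T ∈ H_V` block lower triangular with positive scalar diagonal blocks and off-diagonal
blocks in `V`) has vanishing `(k,k)` block, so `O_ε` lies in the hyperplane
`{x ∈ Z_V : x_{kk} = 0}`. -/
theorem orbit_in_hyperplane {r : ℕ} {n : Fin r → ℕ}
    (V : ∀ l k : Fin r, Submodule ℝ (Matrix (Fin (n l)) (Fin (n k)) ℝ))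
    (ε : Fin r → ℝ) (hε01 : ∀ m, ε m = 0 ∨ ε m = 1)
    (s : Fin r → ℝ)
    (hs : ∀ m : Fin r,
      (ε m = 1 → s m >
        (∑ i : Fin r, if i < m then ε i * (Module.finrank ℝ (V m i) : ℝ) else 0) / 2) ∧
      (ε m = 0 → s m =
        (∑ i : Fin r, if i < m then ε i * (Module.finrank ℝ (V m i) : ℝ) else 0) / 2))
    (k : Fin r) (hsk : s k = 0) :
    ε k = 0 ∧
    (∀ i : Fin r, i < k → ε i = 1 → V k i = ⊥) ∧
    (∀ T : Matrix (BlockIdx n) (BlockIdx n) ℝ,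
      (∀ (a b : Fin r) (i : Fin (n a)) (j : Fin (n b)), a < b → T ⟨a, i⟩ ⟨b, j⟩ = 0) →
      (∃ t : Fin r → ℝ, (∀ m, 0 < t m) ∧
        ∀ (m : Fin r) (i j : Fin (n m)), T ⟨m, i⟩ ⟨m, j⟩ = if i = j then t m else 0) →
      (∀ a b : Fin r, b < a → (Matrix.of fun i j => T ⟨a, i⟩ ⟨b, j⟩) ∈ V a b) →
      ∀ i j : Fin (n k), (T * (Emat ε : Matrix (BlockIdx n) (BlockIdx n) ℝ) * Tᵀ) ⟨k, i⟩ ⟨k, j⟩ = 0) := by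
  have hterm_nonneg : ∀ i : Fin r, i ∈ Finset.univ →
      0 ≤ (if i < k then ε i * (Module.finrank ℝ (V k i) : ℝ) else 0) := by
    intro i _
    split
    · rcases hε01 i with h | h <;> simp [h]
    · exact le_refl _
  have hεk : ε k = 0 := by
    rcases hε01 k with h | h
    · exact h
    · exfalso
      have h1 := (hs k).1 h
      have h2 : (0:ℝ) ≤ ∑ i : Fin r, if i < k then ε i * (Module.finrank ℝ (V k i) : ℝ) else 0 :=
        Finset.sum_nonneg hterm_nonneg
      rw [hsk] at h1; linarith
  have hsum0 : ∑ i : Fin r, (if i < k then ε i * (Module.finrank ℝ (V k i) : ℝ) else 0) = 0 := by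
    have := (hs k).2 hεk
    rw [hsk] at this; linarith
  have hV : ∀ i : Fin r, i < k → ε i = 1 → V k i = ⊥ := by
    intro i hik hεi
    have := (Finset.sum_eq_zero_iff_of_nonneg hterm_nonneg).1 hsum0 i (Finset.mem_univ i)
    rw [if_pos hik, hεi, one_mul] at this
    have hfr : Module.finrank ℝ (V k i) = 0 := by exact_mod_cast this
    exact Submodule.finrank_eq_zero.mp hfr
  refine ⟨hεk, hV, ?_⟩
  rintro T hlow ⟨t, ht, hdiag⟩ hmem i j
  have hentry : (T * (Emat ε : Matrix (BlockIdx n) (BlockIdx n) ℝ) * Tᵀ) ⟨k, i⟩ ⟨k, j⟩ =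
      ∑ p : BlockIdx n, T ⟨k, i⟩ p * ε p.1 * T ⟨k, j⟩ p := by
    simp [Matrix.mul_apply, Emat, Finset.mul_sum, Finset.sum_mul, mul_comm, mul_assoc,
      mul_left_comm]
  rw [hentry]
  refine Finset.sum_eq_zero ?_
  rintro ⟨a, b⟩ _
  rcases lt_trichotomy a k with hak | hak | hak
  · rcases hε01 a with h | h
    · simp [h]
    · have hbot := hV a hak h
      have hm := hmem k a hak
      rw [hbot, Submodule.mem_bot] at hm
      have : T ⟨k, i⟩ ⟨a, b⟩ = 0 := congrFun (congrFun hm i) b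
      simp [this]
  · subst hak
    simp [hεk]
  · have : T ⟨k, i⟩ ⟨a, b⟩ = 0 := hlow k a i b hak
    simp [this]
end
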